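/- Let $V \subseteq W$ be vector spaces over a field of characteristic zero, and consider the Koszul-type complexes $\bigwedge^{n+1} V \xrightarrow{d_V} \bigwedge^n V \otimes V$ and $\bigwedge^{n+1} W \xrightarrow{d_W} \bigwedge^n W \otimes W$ with differentials $d(v_0 \wedge \cdots \wedge v_n) = \sum_i (-1)^i (v_0 \wedge \cdots \widehat{v_i} \cdots \wedge v_n) \otimes v_i$. If $x \in \bigwedge^n V \otimes V$ maps to an element of the image of $d_W$ inside $\bigwedge^n W \otimes W$, and $x$ lies in the kernel of the Koszul differential $\bigwedge^n V \otimes V \to \bigwedge^{n-1} V \otimes \bigwedge^2 V$ (so that $x$ defines a cohomology class), then the induced map on cohomology at the middle term is injective: $x$ already lies in the image of $d_V$. -/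

import Mathlib

set_option synthInstance.maxHeartbeats 1000000

open ExteriorAlgebra TensorProduct

variable {K V W : Type*} [Field K] [AddCommGroup V] [Module K V] [AddCommGroup W] [Module K W]

/-- The wedge `v₀ ∧ ⋯ ∧ v_{n-1}`, as an element of the `n`-th exterior power `⋀^n V`. -/
noncomputable def wedge (n : ℕ) (v : Fin n → V) : ⋀[K]^n V :=
  ⟨ιMulti K n v, ιMulti_range K n (Set.mem_range_self v)⟩

/-- The map `⋀^n V → ⋀^n W` on exterior powers induced by a linear map `f : V → W`. -/
noncomputable def exteriorPowerMap (n : ℕ) (f : V →ₗ[K] W) :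
    ⋀[K]^n V →ₗ[K] ⋀[K]^n W :=
  (ExteriorAlgebra.map f).toLinearMap.restrict (p := ⋀[K]^n V) (q := ⋀[K]^n W)
    (fun x hx => by
      have hle : Submodule.map (ExteriorAlgebra.map f).toLinearMap (⋀[K]^n V) ≤ ⋀[K]^n W := by
        show Submodule.map (ExteriorAlgebra.map f).toLinearMap
            ((LinearMap.range (ι K (M := V))) ^ n) ≤ (LinearMap.range (ι K (M := W))) ^ n
        rw [Submodule.map_pow]
        have h1 : Submodule.map (ExteriorAlgebra.map f).toLinearMap
            (LinearMap.range (ι K (M := V))) ≤ LinearMap.range (ι K (M := W)) := by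
          rw [ι_range_map_map]
          exact Submodule.map_le_iff_le_comap.2 (fun y _ => by simp)
        exact pow_le_pow_left' h1 n
      exact hle ⟨x, hx, rfl⟩)

/-!
The wedge product `wedgeMul : ⋀ⁿ U ⊗ U → ⋀ⁿ⁺¹ U`, `ω ⊗ v ↦ v ∧ ω`, is natural in `U`, and
`wedgeMul ∘ d = (n + 1) • id` for the Koszul differential `d`: each of the `n + 1` terms of
`d (v₀ ∧ ⋯ ∧ vₙ)` is sent back to `v₀ ∧ ⋯ ∧ vₙ`, as moving `vᵢ` to the front costs exactly the
sign `(-1)ⁱ` of that term. Hence if `x ↦ d_W ω`, then `η = (n + 1)⁻¹ • wedgeMul x` maps to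
`ω`, so `d_V η` and `x` have the same image `d_W ω`, and they are equal because `⋀ⁿ f ⊗ f` is
injective over a field.
-/

section Retraction

variable {R A B A' B' : Type*} [CommSemiring R] [AddCommMonoid A] [Module R A] [AddCommMonoid B]
  [Module R B] [AddCommMonoid A'] [Module R A'] [AddCommMonoid B'] [Module R B']

theorem mem_range_of_map_mem_range_of_retraction {dV : A →ₗ[R] B} {dW : A' →ₗ[R] B'}
    {iA : A →ₗ[R] A'} {iB : B →ₗ[R] B'} (hiB : Function.Injective iB)
    {rV : B →ₗ[R] A} {rW : B' →ₗ[R] A'} {c : R} (hc : IsUnit c)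
    (hd : iB ∘ₗ dV = dW ∘ₗ iA) (hr : iA ∘ₗ rV = rW ∘ₗ iB) (hrd : rW ∘ₗ dW = c • LinearMap.id)
    {x : B} (hx : iB x ∈ LinearMap.range dW) : x ∈ LinearMap.range dV := by
  obtain ⟨ω, hω⟩ := hx
  obtain ⟨u, rfl⟩ := hc
  have hη : iA ((↑u⁻¹ : R) • rV x) = ω := by
    rw [map_smul, ← LinearMap.comp_apply, hr, LinearMap.comp_apply, ← hω, ← LinearMap.comp_apply,
      hrd, LinearMap.smul_apply, LinearMap.id_apply, smul_smul, Units.inv_mul, one_smul]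
  refine ⟨(↑u⁻¹ : R) • rV x, hiB ?_⟩
  rw [← LinearMap.comp_apply, hd, LinearMap.comp_apply, hη, hω]

end Retraction

section Koszul

variable {R M N : Type*} [CommRing R] [AddCommGroup M] [Module R M] [AddCommGroup N] [Module R N]

theorem AlternatingMap.neg_one_pow_smul_map_vecCons_comp_succAbove {n : ℕ}
    (g : M [⋀^Fin (n+1)]→ₗ[R] N) (v : Fin (n+1) → M) (i : Fin (n+1)) :
    (-1 : R) ^ (i : ℕ) • g (Matrix.vecCons (v i) (v ∘ i.succAbove)) = g v := by
  have hcast : (-1 : R) ^ (i : ℕ) • g (Matrix.vecCons (v i) (v ∘ i.succAbove)) =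
      (-1 : ℤ) ^ (i : ℕ) • g (Matrix.vecCons (v i) (v ∘ i.succAbove)) := by
    rw [← Int.cast_smul_eq_zsmul R]; push_cast; rfl
  rw [hcast]
  conv_rhs => rw [← Fin.insertNth_self_removeNth i v, g.map_insertNth]
  rfl

noncomputable def wedgeMul (n : ℕ) : ⋀[R]^n M ⊗[R] M →ₗ[R] ⋀[R]^(n+1) M :=
  TensorProduct.lift
    (exteriorPower.alternatingMapLinearEquiv.toLinearMap ∘ₗ
      (exteriorPower.ιMulti R (n+1)).curryLeft).flip

@[simp]
theorem wedgeMul_tmul (n : ℕ) (w : Fin n → M) (v : M) :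
    wedgeMul n (exteriorPower.ιMulti R n w ⊗ₜ[R] v) =
      exteriorPower.ιMulti R (n+1) (Matrix.vecCons v w) := by
  simp [wedgeMul]

theorem map_comp_wedgeMul (n : ℕ) (f : M →ₗ[R] N) :
    exteriorPower.map (n+1) f ∘ₗ wedgeMul n =
      wedgeMul n ∘ₗ TensorProduct.map (exteriorPower.map n f) f := by
  refine TensorProduct.ext (exteriorPower.linearMap_ext (N := M →ₗ[R] ⋀[R]^(n+1) N)
    (AlternatingMap.ext fun w => LinearMap.ext fun v => ?_))
  simp only [LinearMap.compAlternatingMap_apply, LinearMap.compr₂ₛₗ_apply, TensorProduct.mk_apply,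
    LinearMap.comp_apply, TensorProduct.map_tmul, wedgeMul_tmul, exteriorPower.map_apply_ιMulti]
  rw [Matrix.vecCons, Matrix.vecCons, Fin.comp_cons]

def IsKoszulDifferential (n : ℕ) (d : ⋀[R]^(n+1) M →ₗ[R] ⋀[R]^n M ⊗[R] M) : Prop :=
  ∀ v : Fin (n+1) → M, d (exteriorPower.ιMulti R (n+1) v) =
    ∑ i : Fin (n+1), (-1 : R) ^ (i : ℕ) • (exteriorPower.ιMulti R n (v ∘ i.succAbove) ⊗ₜ[R] v i)

theorem IsKoszulDifferential.wedgeMul_comp {n : ℕ} {d : ⋀[R]^(n+1) M →ₗ[R] ⋀[R]^n M ⊗[R] M}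
    (hd : IsKoszulDifferential n d) : wedgeMul n ∘ₗ d = (n + 1 : R) • LinearMap.id := by
  refine exteriorPower.linearMap_ext (AlternatingMap.ext fun v => ?_)
  simp only [LinearMap.compAlternatingMap_apply, LinearMap.comp_apply, hd v, map_sum, map_smul,
    wedgeMul_tmul, AlternatingMap.neg_one_pow_smul_map_vecCons_comp_succAbove, Finset.sum_const,
    Finset.card_univ, Fintype.card_fin, LinearMap.smul_apply, LinearMap.id_apply]
  rw [← Nat.cast_smul_eq_nsmul R, Nat.cast_succ]

theorem IsKoszulDifferential.map_comp_eq_comp_map {n : ℕ}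
    {dM : ⋀[R]^(n+1) M →ₗ[R] ⋀[R]^n M ⊗[R] M} {dN : ⋀[R]^(n+1) N →ₗ[R] ⋀[R]^n N ⊗[R] N}
    (hdM : IsKoszulDifferential n dM) (hdN : IsKoszulDifferential n dN) (f : M →ₗ[R] N) :
    TensorProduct.map (exteriorPower.map n f) f ∘ₗ dM = dN ∘ₗ exteriorPower.map (n+1) f := by
  refine exteriorPower.linearMap_ext (N := ⋀[R]^n N ⊗[R] N) (AlternatingMap.ext fun v => ?_)
  simp [hdM v, hdN (f ∘ v), Function.comp_assoc]

end Koszul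

theorem exteriorPowerMap_eq_map (n : ℕ) (f : V →ₗ[K] W) :
    exteriorPowerMap n f = exteriorPower.map n f := by
  refine exteriorPower.linearMap_ext (AlternatingMap.ext fun v => Subtype.ext ?_)
  simp [exteriorPowerMap, Function.comp_def]

theorem koszul_cohomology_map_injective_general [CharZero K] (m : ℕ)
    (f : V →ₗ[K] W) (hf : Function.Injective f)
    (dV : (⋀[K]^(m+2) V) →ₗ[K] (⋀[K]^(m+1) V) ⊗[K] V)
    (dW : (⋀[K]^(m+2) W) →ₗ[K] (⋀[K]^(m+1) W) ⊗[K] W)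
    (hdV : ∀ v : Fin (m + 2) → V,
      dV (wedge (m + 2) v) =
        ∑ i : Fin (m + 2), ((-1 : K) ^ (i : ℕ)) • ((wedge (m + 1) (v ∘ i.succAbove)) ⊗ₜ[K] v i))
    (hdW : ∀ v : Fin (m + 2) → W,
      dW (wedge (m + 2) v) =
        ∑ i : Fin (m + 2), ((-1 : K) ^ (i : ℕ)) • ((wedge (m + 1) (v ∘ i.succAbove)) ⊗ₜ[K] v i))
    (x : (⋀[K]^(m+1) V) ⊗[K] V)
    (hx : TensorProduct.map (exteriorPowerMap (m + 1) f) f x ∈ LinearMap.range dW) :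
    x ∈ LinearMap.range dV := by
  have hdV' : IsKoszulDifferential (m + 1) dV := hdV
  have hdW' : IsKoszulDifferential (m + 1) dW := hdW
  rw [exteriorPowerMap_eq_map] at hx
  exact mem_range_of_map_mem_range_of_retraction
    (TensorProduct.map_injective_of_flat_flat _ _ (exteriorPower.map_injective_field hf) hf)
    (Nat.cast_add_one_ne_zero (m + 1)).isUnit (hdV'.map_comp_eq_comp_map hdW' f)
    (map_comp_wedgeMul (m + 1) f) hdW'.wedgeMul_comp hx

/-- Let `V ⊆ W` (an injective linear map `f`) be vector spaces over a field of
characteristic zero, with the Koszul complexes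
`⋀^(n+1) U → ⋀^n U ⊗ U → ⋀^(n-1) U ⊗ ⋀² U` (here `n = m+1 ≥ 1`).  If a Koszul cocycle
`x ∈ ⋀^n V ⊗ V` (i.e. `x ∈ ker(⋀^n V ⊗ V → ⋀^(n-1) V ⊗ ⋀² V)`) maps, under the natural
inclusion, into the image of `d_W : ⋀^(n+1) W → ⋀^n W ⊗ W`, then `x` already lies in the image
of `d_V : ⋀^(n+1) V → ⋀^n V ⊗ V`; i.e. the induced map on middle Koszul cohomology is
injective. -/
theorem koszul_cohomology_map_injective [CharZero K] (m : ℕ)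
    (f : V →ₗ[K] W) (hf : Function.Injective f)
    (dV : (⋀[K]^(m+2) V) →ₗ[K] (⋀[K]^(m+1) V) ⊗[K] V)
    (dW : (⋀[K]^(m+2) W) →ₗ[K] (⋀[K]^(m+1) W) ⊗[K] W)
    (d2V : ((⋀[K]^(m+1) V) ⊗[K] V) →ₗ[K] (⋀[K]^m V) ⊗[K] (⋀[K]^2 V))
    (hdV : ∀ v : Fin (m + 2) → V,
      dV (wedge (m + 2) v) =
        ∑ i : Fin (m + 2), ((-1 : K) ^ (i : ℕ)) • ((wedge (m + 1) (v ∘ i.succAbove)) ⊗ₜ[K] v i))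
    (hdW : ∀ v : Fin (m + 2) → W,
      dW (wedge (m + 2) v) =
        ∑ i : Fin (m + 2), ((-1 : K) ^ (i : ℕ)) • ((wedge (m + 1) (v ∘ i.succAbove)) ⊗ₜ[K] v i))
    (hd2V : ∀ (w : Fin (m + 1) → V) (x : V),
      d2V ((wedge (m + 1) w) ⊗ₜ[K] x) =
        ∑ i : Fin (m + 1), ((-1 : K) ^ (i : ℕ)) •
          ((wedge m (w ∘ i.succAbove)) ⊗ₜ[K] (wedge 2 ![w i, x])))
    (x : (⋀[K]^(m+1) V) ⊗[K] V)
    (hcocycle : d2V x = 0)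
    (hx : TensorProduct.map (exteriorPowerMap (m + 1) f) f x ∈ LinearMap.range dW) :
    x ∈ LinearMap.range dV :=
  koszul_cohomology_map_injective_general m f hf dV dW hdV hdW x hx
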